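/- Let α ∈ (0,1) and for θ ∈ (0, π) define a(θ) = 2^α · sin(θ/2)^α · sin(θ + α(π/2 − θ/2)) / sin(θ) and b(θ) = −2^α · sin(θ/2)^α · sin(α(π/2 − θ/2)) / sin(θ). Then a(θ) > |b(θ)| > 0 for every θ ∈ (0, π); in particular the curve (a(θ), b(θ)) never intersects the line a + b = 0. -/

import Mathlib

/-!
Put `φ = α (π/2 − θ/2)`. Both coordinates share the positive factor `2^α sin(θ/2)^α / sin θ`,
so `a(θ) > |b(θ)| > 0` reduces to `sin (θ + φ) > sin φ > 0`. Since `0 < φ < π/2 − θ/2`,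
this follows from `sin (θ + φ) − sin φ = 2 sin (θ/2) cos (θ/2 + φ)`.
-/

open Real

theorem Real.sin_lt_sin_add {θ φ : ℝ} (hθ₀ : 0 < θ) (hθ : θ < 2 * π)
    (hlow : -(π / 2) < θ / 2 + φ) (hup : θ / 2 + φ < π / 2) :
    sin φ < sin (θ + φ) := by
  have hsin : 0 < sin (θ / 2) := sin_pos_of_pos_of_lt_pi (by linarith) (by linarith)
  have hcos : 0 < cos (θ / 2 + φ) := cos_pos_of_mem_Ioo ⟨hlow, hup⟩
  have hdiff : sin (θ + φ) - sin φ = 2 * sin (θ / 2) * cos (θ / 2 + φ) := by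
    rw [sin_sub_sin]
    ring_nf
  nlinarith [mul_pos hsin hcos]

theorem gl_k1_curve_above_diagonal (α : ℝ) (hα : α ∈ Set.Ioo (0:ℝ) 1)
    (θ : ℝ) (hθ : θ ∈ Set.Ioo (0:ℝ) π) :
    2 ^ α * Real.sin (θ / 2) ^ α * Real.sin (θ + α * (π / 2 - θ / 2)) / Real.sin θ >
        |(-(2 ^ α * Real.sin (θ / 2) ^ α * Real.sin (α * (π / 2 - θ / 2)) / Real.sin θ))| ∧
      |(-(2 ^ α * Real.sin (θ / 2) ^ α * Real.sin (α * (π / 2 - θ / 2)) / Real.sin θ))| > 0 := by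
  obtain ⟨hα₀, hα₁⟩ := hα
  obtain ⟨hθ₀, hθπ⟩ := hθ
  set φ := α * (π / 2 - θ / 2)
  have hφ₀ : 0 < φ := mul_pos hα₀ (by linarith)
  have hφ : φ < π / 2 - θ / 2 := mul_lt_of_lt_one_left (by linarith) hα₁
  have hsinφ : 0 < sin φ := sin_pos_of_pos_of_lt_pi hφ₀ (by linarith)
  have hsin_half : 0 < sin (θ / 2) := sin_pos_of_pos_of_lt_pi (by linarith) (by linarith)
  have hsinθ : 0 < sin θ := sin_pos_of_pos_of_lt_pi hθ₀ hθπ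
  rw [abs_neg, abs_of_pos (by positivity)]
  refine ⟨?_, by positivity⟩
  gcongr
  exact sin_lt_sin_add hθ₀ (by linarith) (by linarith) (by linarith)
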